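/- arXiv:1801.00399 — 4 statements merged into one kernel-verified Lean document; each statement's English description precedes it below -/
import Mathlib

section
/- Every n×n matrix B with entries in {0,1} satisfies |det B| ≤ 2^{-n} (n+1)^{(n+1)/2}. -/
/-!
Bordering a `{0,1}`-matrix `B` by a row and a column of ones and replacing each entry `b` by
`1 - 2b` gives an `(n+1) × (n+1)` sign matrix whose determinant is `(-2)^n det B` (a Schur
complement). For a sign matrix `A` of size `m`, `A Aᵀ` is positive semidefinite with trace `m²`,
so AM-GM on its eigenvalues gives `det A ^ 2 ≤ m ^ m`, which is Hadamard's bound.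
-/

open Matrix Finset

theorem Real.prod_le_arith_mean_pow {ι : Type*} (s : Finset ι) (z : ι → ℝ)
    (hz : ∀ i ∈ s, 0 ≤ z i) : ∏ i ∈ s, z i ≤ ((∑ i ∈ s, z i) / #s) ^ #s := by
  rcases s.eq_empty_or_nonempty with rfl | hs
  · simp
  have hcard : (0 : ℝ) < #s := by exact_mod_cast hs.card_pos
  have hmean := Real.geom_mean_le_arith_mean_weighted s (fun _ => (#s : ℝ)⁻¹) z
    (fun _ _ => by positivity) (by simp [hcard.ne']) hz
  rw [Real.finsetProd_rpow s z hz, ← Finset.mul_sum, inv_mul_eq_div] at hmean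
  have hprod : 0 ≤ ∏ i ∈ s, z i := Finset.prod_nonneg hz
  calc ∏ i ∈ s, z i = ((∏ i ∈ s, z i) ^ (#s : ℝ)⁻¹) ^ #s := by
        rw [← Real.rpow_natCast, ← Real.rpow_mul hprod, inv_mul_cancel₀ hcard.ne', Real.rpow_one]
    _ ≤ ((∑ i ∈ s, z i) / #s) ^ #s := by gcongr

namespace Matrix

variable {n : Type*}

section Hadamard

variable [Fintype n] [DecidableEq n]

theorem PosSemidef.det_le_trace_div_card_pow {A : Matrix n n ℝ} (hA : A.PosSemidef) :
    A.det ≤ (A.trace / Fintype.card n) ^ Fintype.card n := by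
  rw [hA.isHermitian.det_eq_prod_eigenvalues, hA.isHermitian.trace_eq_sum_eigenvalues]
  simpa using Real.prod_le_arith_mean_pow univ _ fun i _ => hA.eigenvalues_nonneg i

theorem det_sq_le_sum_sq_div_card_pow (A : Matrix n n ℝ) :
    A.det ^ 2 ≤ ((∑ i, ∑ j, A i j ^ 2) / Fintype.card n) ^ Fintype.card n := by
  have hPSD : (A * Aᵀ).PosSemidef := by
    simpa [conjTranspose_eq_transpose_of_trivial] using posSemidef_self_mul_conjTranspose A
  have htrace : (A * Aᵀ).trace = ∑ i, ∑ j, A i j ^ 2 := by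
    simp [trace, mul_apply, sq]
  calc A.det ^ 2 = (A * Aᵀ).det := by rw [det_mul, det_transpose, sq]
    _ ≤ _ := htrace ▸ hPSD.det_le_trace_div_card_pow

theorem abs_det_le_of_abs_le_one {A : Matrix n n ℝ} (hA : ∀ i j, |A i j| ≤ 1) :
    |A.det| ≤ (Fintype.card n : ℝ) ^ ((Fintype.card n : ℝ) / 2) := by
  set m := Fintype.card n
  have hsum : ∑ i, ∑ j, A i j ^ 2 ≤ m * m := by
    have hsq : ∀ i j, A i j ^ 2 ≤ 1 := fun i j => by
      rw [← sq_abs]; exact pow_le_one₀ (abs_nonneg _) (hA i j)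
    calc ∑ i, ∑ j, A i j ^ 2 ≤ ∑ _i : n, ∑ _j : n, (1 : ℝ) := by gcongr with i _ j; exact hsq i j
      _ = m * m := by simp [m]
  have hdet_sq : A.det ^ 2 ≤ (m : ℝ) ^ m := by
    refine (det_sq_le_sum_sq_div_card_pow A).trans (pow_le_pow_left₀ ?_ ?_ m)
    · positivity
    · exact div_le_of_le_mul₀ (Nat.cast_nonneg _) (Nat.cast_nonneg _) hsum
  calc |A.det| = √(A.det ^ 2) := (Real.sqrt_sq_eq_abs _).symm
    _ ≤ √((m : ℝ) ^ m) := Real.sqrt_le_sqrt hdet_sq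
    _ = (m : ℝ) ^ ((m : ℝ) / 2) := by
      rw [Real.sqrt_eq_rpow, ← Real.rpow_natCast, ← Real.rpow_mul (Nat.cast_nonneg _)]
      ring_nf

end Hadamard

section BorderedSignMatrix

variable {R : Type*} [CommRing R]

def borderedSignMatrix (B : Matrix n n R) : Matrix (Unit ⊕ n) (Unit ⊕ n) R :=
  fromBlocks 1 (of fun _ _ => 1) (of fun _ _ => 1) (of fun i j => 1 - 2 * B i j)

theorem det_borderedSignMatrix [Fintype n] [DecidableEq n] (B : Matrix n n R) :
    B.borderedSignMatrix.det = (-2) ^ Fintype.card n * B.det := by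
  rw [borderedSignMatrix, det_fromBlocks_one₁₁, ← det_smul]
  congr 1
  ext i j
  simp [mul_apply]

theorem abs_borderedSignMatrix_apply_le_one [LinearOrder R] [IsStrictOrderedRing R]
    {B : Matrix n n R} (hB : ∀ i j, B i j = 0 ∨ B i j = 1) (i j : Unit ⊕ n) :
    |B.borderedSignMatrix i j| ≤ 1 := by
  rcases i with _ | i <;> rcases j with _ | j
  · simp [borderedSignMatrix]
  · simp [borderedSignMatrix]
  · simp [borderedSignMatrix]
  · rcases hB i j with h | h <;> norm_num [borderedSignMatrix, h]

end BorderedSignMatrix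

end Matrix

/-- Every `n × n` `{0,1}`-matrix `B` satisfies `|det B| ≤ 2^{-n} (n+1)^{(n+1)/2}`. -/
theorem hadamard_bound_zero_one (n : ℕ) (B : Matrix (Fin n) (Fin n) ℝ)
    (hB : ∀ j k, B j k = 0 ∨ B j k = 1) :
    |B.det| ≤ ((n : ℝ) + 1) ^ (((n : ℝ) + 1) / 2) / 2 ^ n := by
  have hbound := abs_det_le_of_abs_le_one (abs_borderedSignMatrix_apply_le_one hB)
  rw [det_borderedSignMatrix, abs_mul, abs_pow, abs_neg, abs_two, Fintype.card_sum,
    Fintype.card_unit, Fintype.card_fin, Nat.cast_add, Nat.cast_one, add_comm 1] at hbound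
  rw [le_div_iff₀ (by positivity), mul_comm]
  exact hbound
end

section
/- The number of binary necklaces of length n equals (1/n) Σ_{d | n} 2^{n/d} φ(d), where φ is Euler's totient function. -/
open Finset

/-- The numerical value of a binary word of length `n`, so that comparison of values
is lexicographic comparison of words. -/
def wordVal (n : ℕ) [NeZero n] (w : ZMod n → Bool) : ℕ :=
  ∑ i : ZMod n, if w i then 2 ^ (n - 1 - i.val) else 0

/-!
Burnside's lemma for the rotation action of `ZMod n` on words. A word fixed by the rotation `r`
is a function on the cosets of `⟨r⟩`, a subgroup of index `gcd(n, r)`, so there are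
`2 ^ gcd(n, r)` of them; and exactly `φ(d)` residues `r` have `gcd(n, r) = n / d`. Since
`wordVal` is injective, each orbit contains exactly one word minimal among its rotations.
-/

open AddAction Function

/-- Not a global instance: it would clash with `Pi.addAction` whenever `G` acts on `α`. -/
abbrev rotateAddAction (G α : Type*) [AddMonoid G] : AddAction G (G → α) where
  vadd r w i := w (i + r)
  zero_vadd w := funext fun i => congrArg w (add_zero i)
  add_vadd r s w := funext fun i => congrArg w (add_assoc i r s).symm

attribute [local instance] rotateAddAction

section Rotation

variable {G α : Type*} [AddGroup G]

theorem mem_fixedBy_rotate_iff {r : G} {w : G → α} :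
    w ∈ fixedBy (G → α) r ↔
      QuotientAddGroup.leftRel (AddSubgroup.zmultiples r) ≤ Setoid.ker w := by
  constructor
  · intro hw a b hab
    have hper : Periodic w r := congrFun hw
    obtain ⟨k, hk⟩ := AddSubgroup.mem_zmultiples_iff.mp (QuotientAddGroup.leftRel_apply.mp hab)
    rw [Setoid.ker_def, ← add_neg_cancel_left a b, ← hk, hper.zsmul k]
  · intro hw
    funext i
    refine (hw (QuotientAddGroup.leftRel_apply.mpr ?_)).symm
    simp [AddSubgroup.mem_zmultiples r]

def fixedByRotateEquiv (r : G) :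
    fixedBy (G → α) r ≃ (G ⧸ AddSubgroup.zmultiples r → α) :=
  (Equiv.subtypeEquivRight fun _ => mem_fixedBy_rotate_iff).trans (Setoid.liftEquiv _)

theorem card_fixedBy_rotate [Finite G] (r : G) :
    Nat.card (fixedBy (G → α) r) = Nat.card α ^ (AddSubgroup.zmultiples r).index := by
  rw [Nat.card_congr (fixedByRotateEquiv r), Nat.card_fun, AddSubgroup.index]

end Rotation

theorem ZMod.index_zmultiples {n : ℕ} [NeZero n] (r : ZMod n) :
    (AddSubgroup.zmultiples r).index = n.gcd r.val := by
  have hg : 0 < n.gcd r.val := Nat.gcd_pos_of_pos_left _ (NeZero.pos n)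
  have hdvd : n.gcd r.val ∣ n := Nat.gcd_dvd_left _ _
  have horder : addOrderOf r = n / n.gcd r.val := by
    rw [← ZMod.addOrderOf_coe _ (NeZero.ne n), ZMod.natCast_zmod_val]
  have h := (AddSubgroup.zmultiples r).index_mul_card
  rw [Nat.card_zmultiples, Nat.card_zmod, horder] at h
  refine Nat.eq_of_mul_eq_mul_right (Nat.div_pos (Nat.le_of_dvd (NeZero.pos n) hdvd) hg) ?_
  rw [h, Nat.mul_div_cancel' hdvd]

theorem ZMod.sum_comp_val {M : Type*} [AddCommMonoid M] (n : ℕ) [NeZero n] (f : ℕ → M) :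
    ∑ r : ZMod n, f r.val = ∑ k ∈ range n, f k := by
  exact sum_nbij (·.val) (fun r _ => mem_range.mpr r.val_lt)
    (fun r _ s _ h => ZMod.val_injective n h)
    (fun k hk => ⟨k, mem_univ _, ZMod.val_cast_of_lt (mem_range.mp hk)⟩) fun _ _ => rfl

theorem Nat.sum_range_gcd_eq_sum_divisors {M : Type*} [AddCommMonoid M] (n : ℕ) (f : ℕ → M) :
    ∑ k ∈ range n, f (n.gcd k) = ∑ d ∈ n.divisors, d.totient • f (n / d) := by
  rcases eq_or_ne n 0 with rfl | hn
  · simp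
  have hmaps : ∀ k ∈ range n, n.gcd k ∈ n.divisors := fun k _ =>
    Nat.mem_divisors.mpr ⟨Nat.gcd_dvd_left n k, hn⟩
  rw [← sum_fiberwise_of_maps_to hmaps,
    ← Nat.sum_div_divisors n fun d => d.totient • f (n / d)]
  refine sum_congr rfl fun d hd => ?_
  have hdn : d ∣ n := Nat.dvd_of_mem_divisors hd
  rw [sum_congr rfl fun k hk => congrArg f (mem_filter.mp hk).2, sum_const,
    ← Nat.totient_div_of_dvd hdn, Nat.div_div_self hdn hn]

theorem AddAction.card_orbitRel_quotient_eq_card_minimal {G X β : Type*} [AddGroup G]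
    [Finite G] [AddAction G X] [LinearOrder β] {f : X → β} (hf : Injective f) :
    Nat.card (orbitRel.Quotient G X) = Nat.card {x : X // ∀ g : G, f x ≤ f (g +ᵥ x)} := by
  symm
  refine Nat.card_eq_of_bijective (fun x => ⟦x.1⟧) ⟨?_, ?_⟩
  · rintro ⟨x, hx⟩ ⟨y, hy⟩ hxy
    obtain ⟨g, rfl⟩ : x ∈ orbit G y := Quotient.exact hxy
    exact Subtype.ext (hf (le_antisymm (by simpa using hx (-g)) (hy g)))
  · rintro ⟨x⟩
    obtain ⟨g, hg⟩ := Finite.exists_min fun g : G => f (g +ᵥ x)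
    refine ⟨⟨g +ᵥ x, fun h => ?_⟩, Quotient.sound ⟨g, rfl⟩⟩
    rw [← add_vadd]
    exact hg _

theorem wordVal_injective (n : ℕ) [NeZero n] : Injective (wordVal n) := by
  have hrev : Injective fun i : ZMod n => n - 1 - i.val := fun i j h => by
    have := i.val_lt; have := j.val_lt
    exact ZMod.val_injective n (by simp only at h; omega)
  have hval (w : ZMod n → Bool) :
      wordVal n w =
        ∑ k ∈ ({i | w i} : Finset (ZMod n)).image fun i => n - 1 - i.val, 2 ^ k := by
    rw [sum_image hrev.injOn, sum_filter]; rfl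
  intro w w' h
  rw [hval, hval] at h
  have hsupp := image_injective hrev (geomSum_injective le_rfl h)
  funext i
  simpa using congr(i ∈ $hsupp)

/-- The number of binary necklaces of length `n` (counted as words in `{0,1}^n` that are
lexicographically minimal among all their cyclic rotations) equals
`(1/n) ∑_{d ∣ n} 2^{n/d} φ(d)`. -/
theorem card_necklaces (n : ℕ) [NeZero n] :
    ((Finset.univ.filter fun w : ZMod n → Bool =>
        ∀ r : ZMod n, wordVal n w ≤ wordVal n fun i => w (i + r)).card : ℚ)
      = (1 / (n : ℚ)) * ∑ d ∈ n.divisors, (2 : ℚ) ^ (n / d) * (Nat.totient d) := by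
  classical
  have hburnside : ∑ r : ZMod n, Nat.card (fixedBy (ZMod n → Bool) r)
      = Nat.card (orbitRel.Quotient (ZMod n) (ZMod n → Bool)) * n := by
    simpa only [Fintype.card_eq_nat_card, Nat.card_zmod] using
      sum_card_fixedBy_eq_card_orbits_mul_card_addGroup (ZMod n) (ZMod n → Bool)
  have hfixed (r : ZMod n) : Nat.card (fixedBy (ZMod n → Bool) r) = 2 ^ n.gcd r.val := by
    rw [card_fixedBy_rotate, ZMod.index_zmultiples, Nat.card_eq_fintype_card, Fintype.card_bool]
  have hsum : ∑ r : ZMod n, 2 ^ n.gcd r.val = ∑ d ∈ n.divisors, 2 ^ (n / d) * d.totient := by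
    simp only [ZMod.sum_comp_val n fun k => 2 ^ n.gcd k, Nat.sum_range_gcd_eq_sum_divisors,
      smul_eq_mul, mul_comm]
  have horbits : Nat.card (orbitRel.Quotient (ZMod n) (ZMod n → Bool))
      = #{w : ZMod n → Bool | ∀ r : ZMod n, wordVal n w ≤ wordVal n fun i => w (i + r)} := by
    rw [card_orbitRel_quotient_eq_card_minimal (wordVal_injective n), Nat.card_eq_fintype_card,
      Fintype.card_subtype]
    rfl
  simp only [hfixed, hsum, horbits] at hburnside
  rw [one_div, eq_inv_mul_iff_mul_eq₀ (NeZero.ne _), mul_comm]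
  exact_mod_cast hburnside.symm
end

section
/- Let n = 4k+1 be an odd prime, let χ be the Legendre symbol modulo n, and let A_n(x) = circ(x, (1+χ(1))/2, (1+χ(2))/2, ..., (1+χ(n-1))/2). Then det A_n(x) = (x + 2k)(x^2 − x − k)^{2k} as a polynomial in x. -/
/-!
Write `J` for the all-ones matrix and `Q = circ(χ)`. The matrix of the statement is, up to
transposition, the characteristic matrix of `N = (1 - J - Q) / 2`. Since `n ≡ 1 mod 4`, `χ` is
even, and the Jacobi sum of `χ` with itself, `-χ(-1)`, gives `Q² = n - J`; also `QJ = JQ = 0` and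
`J² = nJ`. Hence `N² - N - k = kJ` and `(N + 2k)J = 0`, so `(X + 2k)(X² - X - k)` annihilates
`N`. The quadratic factor has discriminant `n`, which is prime, so it is irreducible over `ℚ` and
the characteristic polynomial of `N` is `(X + 2k)^i (X² - X - k)^j`. Comparing degrees gives
`i + 2j = n` and, as `tr N = 0`, comparing traces gives `2k i = j`; so `i = 1` and `j = 2k`.
-/

open Matrix Polynomial

theorem Commute.sub_dvd_aeval_sub_aeval {R A : Type*} [CommSemiring R] [Ring A] [Algebra R A]
    {a b : A} (h : Commute a b) (p : R[X]) : a - b ∣ aeval a p - aeval b p := by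
  induction p using Polynomial.induction_on' with
  | add p q hp hq => simpa only [map_add, add_sub_add_comm] using dvd_add hp hq
  | monomial i c =>
    obtain ⟨e, he⟩ := h.sub_dvd_pow_sub_pow i
    refine ⟨c • e, ?_⟩
    simp only [aeval_monomial, ← Algebra.smul_def, ← smul_sub, he, mul_smul_comm]

theorem Matrix.charpoly_dvd_pow_card_of_aeval_eq_zero {R ι : Type*} [CommRing R] [Fintype ι]
    [DecidableEq ι] {M : Matrix ι ι R} {q : R[X]} (hq : aeval M q = 0) :
    M.charpoly ∣ q ^ Fintype.card ι := by
  -- `charmatrix M = X - M` divides `q(X) - q(M) = q(X) • 1` in `Matrix ι ι R[X]`; take determinants.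
  have hX : Commute (scalar ι (X : R[X])) (C.mapMatrix M) := scalar_commute _ (Commute.all _) _
  obtain ⟨H, hH⟩ := hX.sub_dvd_aeval_sub_aeval q
  have hXq : aeval (scalar ι (X : R[X])) q = scalar ι q := by
    have := aeval_algebraMap_apply (Matrix ι ι R[X]) (X : R[X]) q
    rwa [aeval_X_left_apply] at this
  have hMq : aeval (C.mapMatrix M) q = 0 := by
    rw [← map_zero (Algebra.ofId R R[X]).mapMatrix, ← hq, ← aeval_algHom_apply]
    rfl
  rw [hXq, hMq, sub_zero] at hH
  refine ⟨H.det, ?_⟩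
  rw [charpoly, charmatrix, ← det_mul, ← hH, scalar_apply, det_diagonal, Finset.prod_const,
    Finset.card_univ]

theorem Polynomial.exists_eq_pow_mul_pow_of_dvd_mul_pow {K : Type*} [Field K] {f p q : K[X]}
    {m : ℕ} (hf : f.Monic) (hp : Irreducible p) (hpm : p.Monic) (hq : Irreducible q)
    (hqm : q.Monic) (h : f ∣ (p * q) ^ m) : ∃ i j, f = p ^ i * q ^ j := by
  rw [mul_pow] at h
  obtain ⟨a, b, ha, hb, rfl⟩ := exists_dvd_and_dvd_of_dvd_mul h
  obtain ⟨i, -, hai⟩ := (dvd_prime_pow hp.prime _).mp ha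
  obtain ⟨j, -, hbj⟩ := (dvd_prime_pow hq.prime _).mp hb
  exact ⟨i, j, eq_of_monic_of_associated hf ((hpm.pow i).mul (hqm.pow j)) (hai.mul_mul hbj)⟩

theorem Polynomial.irreducible_X_sq_sub_X_sub_C {k : ℕ} (hk : (4 * k + 1).Prime) :
    Irreducible (X ^ 2 - X - C (k : ℚ)) := by
  have hdeg : (X ^ 2 - X - C (k : ℚ)).natDegree = 2 := by compute_degree!
  refine irreducible_of_degree_le_three_of_not_isRoot (by rw [hdeg]; decide) fun r hr => ?_
  have hr' : 1 * (r * r) + -1 * r + -k = 0 := by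
    simp only [IsRoot, eval_sub, eval_pow, eval_X, eval_C] at hr
    linear_combination hr
  have hsq := discrim_eq_sq_of_quadratic_eq_zero hr'
  refine (Nat.prime_iff.mp hk).not_isSquare (Rat.isSquare_natCast_iff.mp ⟨2 * r - 1, ?_⟩)
  rw [discrim] at hsq
  push_cast
  linear_combination hsq

namespace MulChar

variable {F R : Type*} [Field F] [Fintype F] [CommRing R] [IsDomain R] {χ : MulChar F R}

theorem sum_apply_sub_eq_zero (hne : χ ≠ 1) (c : F) : ∑ x, χ (c - x) = 0 := by
  rw [← sum_eq_zero_of_ne_one hne]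
  exact Fintype.sum_equiv (Equiv.subLeft c) _ _ fun _ => rfl

theorem IsQuadratic.sum_apply_sub_mul_apply [DecidableEq F] (hχ : χ.IsQuadratic) (hne : χ ≠ 1)
    (c : F) :
    ∑ x, χ (c - x) * χ x = χ (-1) * if c = 0 then (Fintype.card F - 1 : R) else -1 := by
  split_ifs with hc
  · have hunits : (Fintype.card Fˣ : R) = Fintype.card F - 1 := by
      rw [Fintype.card_eq_card_units_add_one (α := F), Nat.cast_add_one, add_sub_cancel_right]
    rw [← hunits, ← sum_one_eq_card_units, ← hχ.sq_eq_one, Finset.mul_sum]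
    refine Finset.sum_congr rfl fun x _ => ?_
    rw [hc, zero_sub, neg_eq_neg_one_mul, map_mul, pow_apply' χ two_ne_zero, sq, mul_assoc]
  · have hχc : χ c ^ 2 = 1 := by
      rw [← pow_apply' χ two_ne_zero, hχ.sq_eq_one, one_apply (isUnit_iff_ne_zero.mpr hc)]
    have hJ : jacobiSum χ χ = -χ (-1) := by
      simpa only [hχ.inv] using jacobiSum_nontrivial_inv hne
    calc ∑ x, χ (c - x) * χ x = ∑ y, χ c ^ 2 * (χ y * χ (1 - y)) := by
          refine (Fintype.sum_equiv (Equiv.mulLeft₀ c hc) _ _ fun y => ?_).symm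
          simp only [Equiv.mulLeft₀_apply, ← mul_one_sub, map_mul]
          ring
      _ = χ (-1) * -1 := by rw [← Finset.mul_sum, hχc, one_mul, ← jacobiSum, hJ, mul_neg_one]

end MulChar

namespace Matrix

variable {F R : Type*} [Field F] [Fintype F] [CommRing R] [IsDomain R] {χ : MulChar F R}

theorem circulant_one_mul_self {n α : Type*} [Fintype n] [AddGroup n] [Semiring α] :
    circulant (1 : n → α) * circulant 1 = (Fintype.card n : α) • circulant 1 := by
  ext i j
  simp [mul_apply]

theorem circulant_mulChar_mul_circulant_one (hne : χ ≠ 1) : circulant χ * circulant 1 = 0 := by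
  ext i j
  simp [circulant_mul, mulVec, dotProduct, MulChar.sum_apply_sub_eq_zero hne]

theorem circulant_mulChar_mul_self [DecidableEq F] (hχ : χ.IsQuadratic) (hne : χ ≠ 1) :
    circulant χ * circulant χ = χ (-1) • ((Fintype.card F : R) • 1 - circulant 1) := by
  ext i j
  rw [circulant_mul, circulant_apply, mulVec, dotProduct]
  simp only [circulant_apply, hχ.sum_apply_sub_mul_apply hne, smul_apply, sub_apply, one_apply,
    sub_eq_zero, Pi.one_apply, smul_eq_mul]
  split_ifs <;> ring

end Matrix

theorem aeval_half_one_sub_sub_eq_zero {A : Type*} [Ring A] [Algebra ℚ A] (k : ℕ) {J Q : A}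
    (hJJ : J * J = ((4 * k + 1 : ℕ) : ℚ) • J) (hQJ : Q * J = 0) (hJQ : J * Q = 0)
    (hQQ : Q * Q = ((4 * k + 1 : ℕ) : ℚ) • 1 - J) :
    aeval ((1 / 2 : ℚ) • (1 - J - Q))
      ((X + C ((2 * k : ℕ) : ℚ)) * (X ^ 2 - X - C ((k : ℕ) : ℚ))) = 0 := by
  set N := (1 / 2 : ℚ) • (1 - J - Q)
  have hquad : N * N - N - (k : ℚ) • 1 = (k : ℚ) • J := by
    simp only [N, smul_mul_smul, sub_mul, mul_sub, one_mul, mul_one, hJJ, hQJ, hJQ, hQQ]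
    push_cast
    module
  have hlin : (N + ((2 * k : ℕ) : ℚ) • 1) * J = 0 := by
    simp only [N, add_mul, smul_mul_assoc, sub_mul, one_mul, hJJ, hQJ]
    push_cast
    module
  simp only [map_mul, map_add, map_sub, aeval_X, aeval_C, Algebra.algebraMap_eq_smul_one, sq,
    hquad, mul_smul_comm, hlin, smul_zero]

theorem aeval_half_one_sub_circulant_quadraticChar_eq_zero {F : Type*} [Field F] [Fintype F]
    [DecidableEq F] {k : ℕ} (hF : Fintype.card F = 4 * k + 1) :
    aeval ((1 / 2 : ℚ) • (1 - circulant 1 - circulant fun x => (quadraticChar F x : ℚ)))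
      ((X + C ((2 * k : ℕ) : ℚ)) * (X ^ 2 - X - C ((k : ℕ) : ℚ))) = 0 := by
  have hF2 : ringChar F ≠ 2 := by
    rw [Ne, FiniteField.even_card_iff_char_two, hF]
    omega
  set χ : MulChar F ℚ := (quadraticChar F).ringHomComp (Int.castRingHom ℚ)
  change aeval ((1 / 2 : ℚ) • (1 - circulant 1 - circulant χ)) _ = 0
  have hχ : χ.IsQuadratic := (quadraticChar_isQuadratic F).comp _
  have hne : χ ≠ 1 :=
    (MulChar.ringHomComp_ne_one_iff Int.cast_injective).mpr (quadraticChar_ne_one hF2)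
  have heven : χ (-1) = 1 := by
    rw [MulChar.ringHomComp_apply, quadraticChar_neg_one hF2, hF,
      ZMod.χ₄_nat_one_mod_four (by omega), map_one]
  refine aeval_half_one_sub_sub_eq_zero k ?_ (circulant_mulChar_mul_circulant_one hne) ?_ ?_
  · rw [circulant_one_mul_self, hF]
  · rw [circulant_mul_comm, circulant_mulChar_mul_circulant_one hne]
  · rw [circulant_mulChar_mul_self hχ hne, heven, one_smul, hF]

theorem Matrix.charpoly_eq_of_trace_eq_zero_of_aeval_eq_zero {ι : Type*} [Fintype ι]
    [DecidableEq ι] {k : ℕ} (hk : (4 * k + 1).Prime) {M : Matrix ι ι ℚ}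
    (hcard : Fintype.card ι = 4 * k + 1) (htr : M.trace = 0)
    (hM : aeval M ((X + C ((2 * k : ℕ) : ℚ)) * (X ^ 2 - X - C ((k : ℕ) : ℚ))) = 0) :
    M.charpoly = (X + C ((2 * k : ℕ) : ℚ)) * (X ^ 2 - X - C ((k : ℕ) : ℚ)) ^ (2 * k) := by
  set p := X + C ((2 * k : ℕ) : ℚ)
  set q := X ^ 2 - X - C ((k : ℕ) : ℚ)
  have hpm : p.Monic := monic_X_add_C _
  have hqm : q.Monic := by unfold q; monicity!
  have hqdeg : q.natDegree = 2 := by unfold q; compute_degree!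
  have hqnext : q.nextCoeff = -1 := by
    rw [nextCoeff_of_natDegree_pos (by omega), hqdeg]
    simp [q]
  obtain ⟨i, j, hij⟩ := exists_eq_pow_mul_pow_of_dvd_mul_pow M.charpoly_monic
    (irreducible_of_degree_eq_one (degree_X_add_C _)) hpm (irreducible_X_sq_sub_X_sub_C hk) hqm
    (charpoly_dvd_pow_card_of_aeval_eq_zero hM)
  have hdeg : i + 2 * j = 4 * k + 1 := by
    have := M.charpoly_natDegree_eq_dim
    rwa [hij, (hpm.pow i).natDegree_mul (hqm.pow j), hpm.natDegree_pow, hqm.natDegree_pow,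
      natDegree_X_add_C, hqdeg, hcard, mul_one, mul_comm] at this
  have htrace : (i : ℚ) * (2 * k) - j = 0 := by
    have := M.trace_eq_neg_charpoly_nextCoeff
    rw [htr, hij, (hpm.pow i).nextCoeff_mul (hqm.pow j), hpm.nextCoeff_pow, hqm.nextCoeff_pow,
      nextCoeff_X_add_C, hqnext] at this
    push_cast at this
    linear_combination this
  have hj : j = 2 * k * i := by
    exact_mod_cast (by linear_combination -htrace : (j : ℚ) = 2 * k * i)
  obtain rfl : i = 1 := by
    subst hj
    nlinarith
  rw [hij, hj, pow_one, mul_one]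

theorem legendreSym_val (p : ℕ) [Fact p.Prime] (m : ZMod p) :
    legendreSym p m.val = quadraticChar (ZMod p) m := by
  rw [legendreSym, Int.cast_natCast, ZMod.natCast_zmod_val]

theorem det_legendre_circulant_general (k : ℕ) (hp : (4 * k + 1).Prime) :
    (Matrix.of fun p q : ZMod (4 * k + 1) =>
        (fun m : ZMod (4 * k + 1) =>
            if m = 0 then (Polynomial.X : Polynomial ℚ)
            else Polynomial.C ((1 + (@legendreSym (4 * k + 1) ⟨hp⟩ m.val : ℚ)) / 2)) (q - p)).det
      = (Polynomial.X + Polynomial.C ((2 * k : ℕ) : ℚ)) *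
          (Polynomial.X ^ 2 - Polynomial.X - Polynomial.C ((k : ℕ) : ℚ)) ^ (2 * k) := by
  have := Fact.mk hp
  rw [← charpoly_eq_of_trace_eq_zero_of_aeval_eq_zero hp (ZMod.card _) (by simp [trace])
    (aeval_half_one_sub_circulant_quadraticChar_eq_zero (ZMod.card _)), charpoly,
    ← det_transpose]
  congr 1
  ext p q : 1
  rw [transpose_apply, of_apply]
  dsimp only
  by_cases hpq : p - q = 0
  · rw [if_pos hpq, sub_eq_zero.mp hpq, charmatrix_apply_eq]
    simp
  · rw [if_neg hpq, charmatrix_apply_ne _ _ _ (sub_ne_zero.mp hpq), legendreSym_val, ← C_neg]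
    congr 1
    simp only [Matrix.smul_apply, Matrix.sub_apply, one_apply_ne (sub_ne_zero.mp hpq),
      circulant_apply, Pi.one_apply, smul_eq_mul]
    ring

/-- For `n = 4k+1` an odd prime and `χ` the Legendre symbol mod `n`, the circulant
`A_n(x) = circ(x, (1+χ(1))/2, ..., (1+χ(n-1))/2)` satisfies
`det A_n(x) = (x + 2k)(x² − x − k)^{2k}` as a polynomial in `x`. -/
theorem det_legendre_circulant (k : ℕ) (hk : 0 < k) (hp : (4 * k + 1).Prime) :
    (Matrix.of fun p q : ZMod (4 * k + 1) =>
        (fun m : ZMod (4 * k + 1) =>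
            if m = 0 then (Polynomial.X : Polynomial ℚ)
            else Polynomial.C ((1 + (@legendreSym (4 * k + 1) ⟨hp⟩ m.val : ℚ)) / 2)) (q - p)).det
      = (Polynomial.X + Polynomial.C ((2 * k : ℕ) : ℚ)) *
          (Polynomial.X ^ 2 - Polynomial.X - Polynomial.C ((k : ℕ) : ℚ)) ^ (2 * k) :=
  det_legendre_circulant_general k hp
end

section
/- Let n = 4k+1 be an odd prime and let A = circ(0, (1+χ(1))/2, ..., (1+χ(n-1))/2) where χ is the Legendre symbol modulo n. Then A^2 + A = k(I + J), where I is the identity matrix and J is the all-ones n×n matrix. -/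
/-!
Write `q = 4k + 1`, `χ` for the quadratic character and `J` for the all-ones matrix. The matrix
is `A = (J - I + Q) / 2`, where `Q i j = χ (j - i)` is the Jacobsthal matrix. Since `χ` sums to
zero, `QJ = JQ = 0`; and `(Q²) i j = ∑ x, χ x χ (s - x)` with `s = j - i`, which is
`χ (-1) (q - 1)` for `s = 0` and the Jacobi sum of `χ` with itself, `-χ (-1)`, otherwise.
As `q ≡ 1 [MOD 4]`, `χ (-1) = 1`, so `Q² = qI - J`, and expanding `(J - I + Q)² + 2 (J - I + Q)`
gives `(q - 1)(I + J)`.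
-/

open Matrix

theorem allOnes_mul_allOnes {n R : Type*} [Fintype n] [Semiring R] :
    (of fun _ _ => 1 : Matrix n n R) * of (fun _ _ => 1) = Fintype.card n • of fun _ _ => 1 := by
  ext; simp [mul_apply]

section QuadraticChar

variable {F : Type*} [Field F] [Fintype F] [DecidableEq F]

local notation "χ" => quadraticChar F

theorem quadraticChar_sum_mul_sub_of_ne_zero (hF : ringChar F ≠ 2) {s : F} (hs : s ≠ 0) :
    ∑ x, χ x * χ (s - x) = -χ (-1) := by
  have hJ : jacobiSum χ χ = -χ (-1) := by
    simpa only [(quadraticChar_isQuadratic F).inv] using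
      jacobiSum_nontrivial_inv (quadraticChar_ne_one hF)
  calc ∑ x, χ x * χ (s - x)
      = ∑ y, χ (s * y) * χ (s - s * y) :=
        (Fintype.sum_equiv (Equiv.mulLeft₀ s hs) _ _ fun _ => rfl).symm
    _ = ∑ y, χ s ^ 2 * (χ y * χ (1 - y)) := by
        refine Finset.sum_congr rfl fun y _ => ?_
        rw [← mul_one_sub, map_mul, map_mul]; ring
    _ = -χ (-1) := by rw [← Finset.mul_sum, quadraticChar_sq_one hs, one_mul]; exact hJ

theorem quadraticChar_sum_mul_neg :
    ∑ x, χ x * χ (-x) = χ (-1) * (Fintype.card F - 1) := by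
  have hsq : ∀ x, χ x ^ 2 = (1 : MulChar F ℤ) x := fun x => by
    rw [← MulChar.pow_apply' _ two_ne_zero, (quadraticChar_isQuadratic F).sq_eq_one]
  calc ∑ x, χ x * χ (-x) = χ (-1) * ∑ x, (1 : MulChar F ℤ) x := by
        rw [Finset.mul_sum]
        refine Finset.sum_congr rfl fun x _ => ?_
        rw [neg_eq_neg_one_mul x, map_mul, ← hsq]; ring
    _ = χ (-1) * (Fintype.card F - 1) := by
        rw [MulChar.sum_one_eq_card_units, Fintype.card_units, Nat.cast_sub Fintype.card_pos]
        rfl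

theorem quadraticChar_neg_one_eq_one (h : Fintype.card F % 4 = 1) : χ (-1) = 1 :=
  (quadraticChar_one_iff_isSquare (neg_ne_zero.2 one_ne_zero)).2
    (FiniteField.isSquare_neg_one_iff.2 (by omega))

omit [DecidableEq F] in
theorem ringChar_ne_two_of_card_mod_four (h : Fintype.card F % 4 = 1) : ringChar F ≠ 2 := by
  rw [Ne, FiniteField.even_card_iff_char_two]; omega

section Jacobsthal

variable (F) (R : Type*) [CommRing R]

def jacobsthalMatrix : Matrix F F R := of fun i j => (χ (j - i) : R)

variable {F R}

theorem jacobsthalMatrix_mul_allOnes (hF : ringChar F ≠ 2) :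
    jacobsthalMatrix F R * of (fun _ _ => 1) = 0 := by
  ext i j
  have hshift : ∑ x, χ (x - i) = ∑ x, χ x := Fintype.sum_equiv (Equiv.subRight i) _ _ fun _ => rfl
  simp only [jacobsthalMatrix, mul_apply, of_apply, mul_one, Matrix.zero_apply, ← Int.cast_sum,
    hshift, quadraticChar_sum_zero hF, Int.cast_zero]

theorem allOnes_mul_jacobsthalMatrix (hF : ringChar F ≠ 2) :
    of (fun _ _ => 1) * jacobsthalMatrix F R = 0 := by
  ext i j
  have hshift : ∑ x, χ (j - x) = ∑ x, χ x := Fintype.sum_equiv (Equiv.subLeft j) _ _ fun _ => rfl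
  simp only [jacobsthalMatrix, mul_apply, of_apply, one_mul, Matrix.zero_apply, ← Int.cast_sum,
    hshift, quadraticChar_sum_zero hF, Int.cast_zero]

theorem jacobsthalMatrix_mul_self (hF : ringChar F ≠ 2) :
    jacobsthalMatrix F R * jacobsthalMatrix F R =
      (χ (-1) : R) • ((Fintype.card F : R) • 1 - of fun _ _ => 1) := by
  ext i k
  have hshift : ∑ j, χ (j - i) * χ (k - j) = ∑ x, χ x * χ (k - i - x) :=
    Fintype.sum_equiv (Equiv.subRight i) _ _ fun j => by simp
  simp only [jacobsthalMatrix, mul_apply, of_apply, ← Int.cast_mul, ← Int.cast_sum, hshift]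
  rcases eq_or_ne i k with rfl | hik
  · simp only [sub_self, zero_sub, quadraticChar_sum_mul_neg, Matrix.smul_apply,
      Matrix.sub_apply, one_apply_eq, of_apply]
    push_cast; ring
  · rw [quadraticChar_sum_mul_sub_of_ne_zero hF (sub_ne_zero.2 hik.symm)]
    simp [hik]

end Jacobsthal

section Paley

variable (F) (R : Type*) [Field R]

def paleyMatrix : Matrix F F R :=
  of fun i j => if j - i = 0 then 0 else (1 + (χ (j - i) : R)) / 2

variable {F R}

theorem paleyMatrix_eq_inv_two_smul :
    paleyMatrix F R = (2⁻¹ : R) • (of (fun _ _ => 1) - 1 + jacobsthalMatrix F R) := by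
  ext i j
  rcases eq_or_ne i j with rfl | hij
  · simp [paleyMatrix, jacobsthalMatrix]
  · have hji : j - i ≠ 0 := sub_ne_zero.2 hij.symm
    simp [paleyMatrix, jacobsthalMatrix, hij, hji, div_eq_inv_mul]

theorem paleyMatrix_sq_add_self [CharZero R] {k : ℕ} (hF : Fintype.card F = 4 * k + 1) :
    paleyMatrix F R ^ 2 + paleyMatrix F R = (k : R) • (1 + of fun _ _ => 1) := by
  have hF4 : Fintype.card F % 4 = 1 := by omega
  have hF2 := ringChar_ne_two_of_card_mod_four hF4
  have hQQ := jacobsthalMatrix_mul_self (R := R) hF2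
  rw [quadraticChar_neg_one_eq_one hF4, Int.cast_one, one_smul, hF] at hQQ
  have hQJ := jacobsthalMatrix_mul_allOnes (R := R) hF2
  have hJQ := allOnes_mul_jacobsthalMatrix (R := R) hF2
  have hJJ := allOnes_mul_allOnes (n := F) (R := R)
  rw [hF] at hJJ
  rw [paleyMatrix_eq_inv_two_smul, sq, smul_mul_smul_comm]
  simp only [add_mul, mul_add, sub_mul, mul_sub, one_mul, mul_one, hQQ, hQJ, hJQ, hJJ]
  push_cast
  module

end Paley

end QuadraticChar

theorem legendre_circulant_sq_general (k : ℕ) (hp : (4 * k + 1).Prime) :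
    letI A : Matrix (ZMod (4 * k + 1)) (ZMod (4 * k + 1)) ℚ :=
      Matrix.of fun p q =>
        (fun m : ZMod (4 * k + 1) =>
            if m = 0 then (0 : ℚ)
            else (1 + (@legendreSym (4 * k + 1) ⟨hp⟩ m.val : ℚ)) / 2) (q - p)
    A ^ 2 + A = (k : ℚ) • ((1 : Matrix (ZMod (4 * k + 1)) (ZMod (4 * k + 1)) ℚ)
      + Matrix.of fun _ _ => (1 : ℚ)) := by
  have : Fact (4 * k + 1).Prime := ⟨hp⟩
  convert paleyMatrix_sq_add_self (R := ℚ) (ZMod.card (4 * k + 1)) using 3 <;>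
  · ext p q
    simp only [paleyMatrix, of_apply, legendreSym, ZMod.natCast_val, ZMod.intCast_cast,
      ZMod.cast_id', id]

/-- For `n = 4k+1` an odd prime and `χ` the Legendre symbol mod `n`, the circulant
`A = circ(0, (1+χ(1))/2, ..., (1+χ(n-1))/2)` satisfies `A² + A = k(I + J)`,
where `J` is the all-ones matrix. -/
theorem legendre_circulant_sq (k : ℕ) (hk : 0 < k) (hp : (4 * k + 1).Prime) :
    letI A : Matrix (ZMod (4 * k + 1)) (ZMod (4 * k + 1)) ℚ :=
      Matrix.of fun p q =>
        (fun m : ZMod (4 * k + 1) =>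
            if m = 0 then (0 : ℚ)
            else (1 + (@legendreSym (4 * k + 1) ⟨hp⟩ m.val : ℚ)) / 2) (q - p)
    A ^ 2 + A = (k : ℚ) • ((1 : Matrix (ZMod (4 * k + 1)) (ZMod (4 * k + 1)) ℚ)
      + Matrix.of fun _ _ => (1 : ℚ)) :=
  legendre_circulant_sq_general k hp
end
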